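/- Let a(n) = S(n)/2ⁿ, where S(n) = ∑_{k=0}^n C(−1/3, k)·C(−2/3, n−k)·C(−1/6, k)·C(−5/6, n−k). Then the series ∑_{k=0}^∞ (36k³−108k²−53k−9)·a(k) converges and equals 0. -/

import Mathlib

/-- Generalized binomial coefficient `C(x, k) = x(x-1)⋯(x-k+1)/k!`. -/
noncomputable def genBinom (x : ℝ) (k : ℕ) : ℝ :=
  (∏ i ∈ Finset.range k, (x - i)) / (Nat.factorial k)

/-- `S n = ∑_{k=0}^n C(-1/3,k) C(-2/3,n-k) C(-1/6,k) C(-5/6,n-k)`. -/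
noncomputable def S (n : ℕ) : ℝ :=
  ∑ k ∈ Finset.range (n + 1),
    genBinom (-1/3) k * genBinom (-2/3) (n - k) *
      genBinom (-1/6) k * genBinom (-5/6) (n - k)

noncomputable def a (n : ℕ) : ℝ := S n / 2 ^ n

lemma genBinom_succ (x : ℝ) (k : ℕ) :
    genBinom x (k + 1) = genBinom x k * (x - k) / (k + 1) := by
  unfold genBinom
  rw [Finset.prod_range_succ, Nat.factorial_succ]
  push_cast
  rw [div_mul_eq_mul_div, div_div]
  rw [mul_comm ((k:ℝ) + 1)]

noncomputable def gbU (k : ℕ) : ℝ := genBinom (-1/3) k * genBinom (-1/6) k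
noncomputable def gbV (m : ℕ) : ℝ := genBinom (-2/3) m * genBinom (-5/6) m

lemma gbU_succ (k : ℕ) :
    gbU (k + 1) = gbU k * (((k:ℝ) + 1/3) * ((k:ℝ) + 1/6)) / ((k:ℝ) + 1)^2 := by
  unfold gbU
  rw [genBinom_succ, genBinom_succ]
  have h : ((k:ℝ) + 1) ≠ 0 := by positivity
  field_simp
  ring

lemma gbV_succ (m : ℕ) :
    gbV (m + 1) = gbV m * (((m:ℝ) + 2/3) * ((m:ℝ) + 5/6)) / ((m:ℝ) + 1)^2 := by
  unfold gbV
  rw [genBinom_succ, genBinom_succ]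
  have h : ((m:ℝ) + 1) ≠ 0 := by positivity
  field_simp
  ring

/-- numerator polynomial of the WZ certificate -/
noncomputable def NP (n k : ℝ) : ℝ :=
  k^2 * ( -80/3 + 1448/9*k - 328*k^2 + 268*k^3 - 72*k^4
    - 256/3*n + 412*n*k - 560*n*k^2 + 216*n*k^3
    - 84*n^2 + 316*n^2*k - 216*n^2*k^2 - 24*n^3 + 72*n^3*k )

noncomputable def Gc (k M : ℕ) : ℝ :=
  NP ((k:ℝ) + M - 1) k * gbU k * gbV M /
    (((M:ℝ) + 1)^2 * ((M:ℝ) - 1/3) * ((M:ℝ) - 1/6))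

noncomputable def P0 (n : ℝ) : ℝ := 144*n^3 + 432*n^2 + 428*n + 140
noncomputable def Q1 (n : ℝ) : ℝ := 288*n^3 + 1296*n^2 + 2048*n + 1128
noncomputable def P2 (n : ℝ) : ℝ := 144*(n + 2)^3

lemma cast_sub_ne (m : ℕ) {q : ℝ} (h0 : 0 < q) (h1 : q < 1) : (m:ℝ) - q ≠ 0 := by
  rcases m with _ | m
  · simpa using h0.ne'
  · have : (1:ℝ) ≤ ((m+1:ℕ):ℝ) := by exact_mod_cast Nat.one_le_iff_ne_zero.mpr (by omega)
    push_cast at this ⊢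
    nlinarith

set_option maxHeartbeats 4000000 in
lemma nat_mul_sub_one_ne (m : ℕ) {c : ℝ} (hc : 1 < c) : (m:ℝ) * c - 1 ≠ 0 := by
  rcases m with _ | m
  · norm_num
  · have h1 : (1:ℝ) ≤ ((m+1:ℕ):ℝ) := by exact_mod_cast Nat.one_le_iff_ne_zero.mpr (by omega)
    push_cast at h1 ⊢
    nlinarith

lemma key (k m : ℕ) :
    P0 ((k:ℝ) + m) * (gbU k * gbV m) - Q1 ((k:ℝ) + m) * (gbU k * gbV (m+1))
      + P2 ((k:ℝ) + m) * (gbU k * gbV (m+2)) = Gc (k+1) m - Gc k (m+1) := by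
  rw [show m + 2 = (m+1)+1 from rfl]
  unfold Gc
  rw [gbV_succ (m+1), gbV_succ m, gbU_succ k]
  unfold P0 Q1 P2 NP
  have hk1 : ((k:ℝ) + 1) ≠ 0 := by positivity
  have hm1 : ((m:ℝ) + 1) ≠ 0 := by positivity
  have hm2 : ((m:ℝ) + 2) ≠ 0 := by positivity
  have h3 : (m:ℝ) - 1/3 ≠ 0 := cast_sub_ne m (by norm_num) (by norm_num)
  have h6 : (m:ℝ) - 1/6 ≠ 0 := cast_sub_ne m (by norm_num) (by norm_num)
  have h23 : (m:ℝ) + 2/3 ≠ 0 := by positivity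
  have h56 : (m:ℝ) + 5/6 ≠ 0 := by positivity
  have hmn : (0:ℝ) ≤ (m:ℝ) := Nat.cast_nonneg m
  have ha : ((m:ℝ) + 1 + 1) ≠ 0 := by positivity
  have hb : ((m:ℝ) + 1 - 1/3) ≠ 0 := by intro hc; nlinarith
  have hc' : ((m:ℝ) + 1 - 1/6) ≠ 0 := by intro hc; nlinarith
  have e1 : ((m:ℝ) * 3 - 1) ≠ 0 := nat_mul_sub_one_ne m (by norm_num)
  have e2 : ((m:ℝ) * 6 - 1) ≠ 0 := nat_mul_sub_one_ne m (by norm_num)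
  have e3 : (((m:ℝ) + 1) * 3 - 1) ≠ 0 := by
    have := nat_mul_sub_one_ne (m+1) (c := 3) (by norm_num); push_cast at this ⊢; linarith [this]
  have e4 : (((m:ℝ) + 1) * 6 - 1) ≠ 0 := by
    have := nat_mul_sub_one_ne (m+1) (c := 6) (by norm_num); push_cast at this ⊢; linarith [this]
  push_cast
  have f4 : (3 * ((m:ℝ) + 1) - 1) ≠ 0 := by intro hc; nlinarith
  have f5 : (6 * ((m:ℝ) + 1) - 1) ≠ 0 := by intro hc; nlinarith
  field_simp
  ring

lemma S_eq (n : ℕ) : S n = ∑ k ∈ Finset.range (n+1), gbU k * gbV (n - k) := by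
  unfold S gbU gbV
  exact Finset.sum_congr rfl fun k _ => by ring

lemma NP_zero (n : ℝ) : NP n 0 = 0 := by simp [NP]

lemma Gc_k0 (M : ℕ) : Gc 0 M = 0 := by
  simp [Gc, NP_zero]

lemma gbV_zero : gbV 0 = 1 := by simp [gbV, genBinom]

lemma gbV_one : gbV 1 = 5/9 := by
  have := gbV_succ 0
  rw [gbV_zero] at this
  rw [this]; norm_num

lemma Gc_M0 (k : ℕ) : Gc k 0 = 18 * NP ((k:ℝ) - 1) k * gbU k := by
  unfold Gc
  rw [gbV_zero]
  norm_num
  ring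

set_option maxHeartbeats 1000000 in
lemma S_rec (n : ℕ) :
    P0 n * S n - Q1 n * S (n+1) + P2 n * S (n+2) = 0 := by
  have tele := Finset.sum_range_sub (f := fun k => Gc k (n+1-k)) (n+1)
  have main : ∑ k ∈ Finset.range (n+1),
      (P0 n * (gbU k * gbV (n-k)) - Q1 n * (gbU k * gbV (n+1-k))
        + P2 n * (gbU k * gbV (n+2-k)))
      = Gc (n+1) 0 - Gc 0 (n+1) := by
    rw [show Gc (n+1) 0 - Gc 0 (n+1)
        = (fun k => Gc k (n+1-k)) (n+1) - (fun k => Gc k (n+1-k)) 0 by norm_num]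
    rw [← tele]
    apply Finset.sum_congr rfl
    intro k hk
    have hkn : k ≤ n := Nat.lt_succ_iff.mp (Finset.mem_range.mp hk)
    have h1 : n + 1 - k = (n - k) + 1 := by omega
    have h2 : n + 2 - k = (n - k) + 2 := by omega
    have h3 : n + 1 - (k + 1) = n - k := by omega
    simp only [h1, h2, h3]
    have hc : (n:ℝ) = (k:ℝ) + ((n - k : ℕ) : ℝ) := by
      rw [Nat.cast_sub hkn]; ring
    rw [hc]
    exact key k (n - k)
  have e2 : S (n+1) = (∑ k ∈ Finset.range (n+1), gbU k * gbV (n+1-k)) + gbU (n+1) * gbV 0 := by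
    rw [S_eq, Finset.sum_range_succ, Nat.sub_self]
  have e3 : S (n+2) = (∑ k ∈ Finset.range (n+1), gbU k * gbV (n+2-k))
      + gbU (n+1) * gbV 1 + gbU (n+2) * gbV 0 := by
    rw [S_eq, show n+2+1 = (n+1)+1+1 from rfl, Finset.sum_range_succ, Finset.sum_range_succ,
      Nat.sub_self, show n+2-(n+1) = 1 by omega]
  have expand : P0 n * S n - Q1 n * S (n+1) + P2 n * S (n+2)
      = (∑ k ∈ Finset.range (n+1),
          (P0 n * (gbU k * gbV (n-k)) - Q1 n * (gbU k * gbV (n+1-k))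
            + P2 n * (gbU k * gbV (n+2-k))))
        - Q1 (n:ℝ) * (gbU (n+1) * gbV 0)
        + P2 (n:ℝ) * (gbU (n+1) * gbV 1 + gbU (n+2) * gbV 0) := by
    rw [S_eq, e2, e3]
    simp only [Finset.sum_add_distrib, Finset.sum_sub_distrib, ← Finset.mul_sum]
    ring
  rw [expand, main, Gc_k0, Gc_M0]
  rw [gbV_zero, gbV_one, gbU_succ (n+1)]
  unfold Q1 P2 NP
  have h1 : ((n:ℝ) + 1 + 1) ≠ 0 := by positivity
  push_cast
  field_simp
  ring

lemma S_a (n : ℕ) : S n = a n * 2 ^ n := by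
  unfold a
  field_simp

lemma a_rec (n : ℕ) :
    (36*(n:ℝ)^3 + 108*(n:ℝ)^2 + 107*n + 35) * a n
      - (144*(n:ℝ)^3 + 648*(n:ℝ)^2 + 1024*n + 564) * a (n+1)
      + 144*((n:ℝ)+2)^3 * a (n+2) = 0 := by
  have h := S_rec n
  rw [S_a n, S_a (n+1), S_a (n+2), pow_succ, pow_succ] at h
  unfold P0 Q1 P2 at h
  have h4 : ((4:ℝ) * 2^n) ≠ 0 := by positivity
  apply mul_left_cancel₀ h4
  rw [mul_zero]
  linear_combination h

lemma a_zero : a 0 = 1 := by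
  simp [a, S, genBinom]

lemma a_one : a 1 = 11/36 := by
  simp [a, S, Finset.sum_range_succ, genBinom]
  norm_num

lemma psum (N : ℕ) :
    ∑ k ∈ Finset.range N, (36*(k:ℝ)^3 - 108*(k:ℝ)^2 - 53*k - 9) * a k
      = (216*(N:ℝ)^2 + 160*N + 44) * a N - 144*((N:ℝ)+1)^3 * a (N+1) := by
  induction N with
  | zero => simp [a_zero, a_one]; norm_num
  | succ N ih =>
      rw [Finset.sum_range_succ, ih]
      push_cast
      linear_combination a_rec N

lemma abs_genBinom_le {x : ℝ} (h1 : -1 ≤ x) (h2 : x ≤ 0) (k : ℕ) :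
    |genBinom x k| ≤ 1 := by
  induction k with
  | zero => simp [genBinom]
  | succ n ih =>
      rw [genBinom_succ, abs_div, abs_mul]
      have hn : |x - n| ≤ (n:ℝ) + 1 := by
        rw [abs_le]
        constructor <;> nlinarith [Nat.cast_nonneg (α := ℝ) n]
      have hd : |((n:ℝ) + 1)| = (n:ℝ) + 1 := abs_of_pos (by positivity)
      rw [hd, div_le_one (by positivity)]
      calc |genBinom x n| * |x - n| ≤ 1 * ((n:ℝ)+1) :=
            mul_le_mul ih hn (abs_nonneg _) zero_le_one
        _ = (n:ℝ) + 1 := one_mul _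

lemma abs_S_le (n : ℕ) : |S n| ≤ (n:ℝ) + 1 := by
  unfold S
  calc |∑ k ∈ Finset.range (n+1), genBinom (-1/3) k * genBinom (-2/3) (n-k) *
          genBinom (-1/6) k * genBinom (-5/6) (n-k)|
      ≤ ∑ k ∈ Finset.range (n+1), |genBinom (-1/3) k * genBinom (-2/3) (n-k) *
          genBinom (-1/6) k * genBinom (-5/6) (n-k)| := Finset.abs_sum_le_sum_abs _ _
    _ ≤ ∑ _k ∈ Finset.range (n+1), (1:ℝ) := by
        apply Finset.sum_le_sum
        intro k _
        rw [abs_mul, abs_mul, abs_mul]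
        have b1 := abs_genBinom_le (x := -1/3) (by norm_num) (by norm_num) k
        have b2 := abs_genBinom_le (x := -2/3) (by norm_num) (by norm_num) (n-k)
        have b3 := abs_genBinom_le (x := -1/6) (by norm_num) (by norm_num) k
        have b4 := abs_genBinom_le (x := -5/6) (by norm_num) (by norm_num) (n-k)
        have p1 := abs_nonneg (genBinom (-1/3) k)
        have p2 := abs_nonneg (genBinom (-2/3) (n-k))
        have p3 := abs_nonneg (genBinom (-1/6) k)
        have p4 := abs_nonneg (genBinom (-5/6) (n-k))
        exact mul_le_one₀ (mul_le_one₀ (mul_le_one₀ b1 p2 b2) p3 b3) p4 b4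
    _ = (n:ℝ) + 1 := by simp
    
lemma abs_a_le (n : ℕ) : |a n| ≤ ((n:ℝ) + 1) * (1/2)^n := by
  unfold a
  rw [abs_div, abs_of_pos (show (0:ℝ) < 2^n by positivity)]
  calc |S n| / 2^n ≤ ((n:ℝ)+1) / 2^n := by gcongr; exact abs_S_le n
    _ = ((n:ℝ)+1) * (1/2)^n := by rw [div_pow, one_pow]; ring

lemma bound_T (N : ℕ) :
    ‖(216*(N:ℝ)^2 + 160*N + 44) * a N - 144*((N:ℝ)+1)^3 * a (N+1)‖
      ≤ 288 * ((N:ℝ)+2)^4 * (1/2)^N := by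
  have hN : (0:ℝ) ≤ (N:ℝ) := Nat.cast_nonneg N
  have hp : (0:ℝ) < (1/2:ℝ)^N := by positivity
  have h1 := abs_a_le N
  have h2 := abs_a_le (N+1)
  push_cast at h2
  have c1 : |(216*(N:ℝ)^2 + 160*N + 44) * a N| ≤ (216*(N:ℝ)^2 + 160*N + 44) * (((N:ℝ)+1) * (1/2)^N) := by
    rw [abs_mul, abs_of_pos (by positivity : (0:ℝ) < 216*(N:ℝ)^2 + 160*N + 44)]
    exact mul_le_mul_of_nonneg_left h1 (by positivity)
  have c2 : |144*((N:ℝ)+1)^3 * a (N+1)| ≤ 144*((N:ℝ)+1)^3 * (((N:ℝ)+1+1) * (1/2)^(N+1)) := by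
    rw [abs_mul, abs_of_pos (by positivity : (0:ℝ) < 144*((N:ℝ)+1)^3)]
    exact mul_le_mul_of_nonneg_left h2 (by positivity)
  have tri := abs_sub _ _ |>.trans (add_le_add c1 c2)
  calc ‖(216*(N:ℝ)^2 + 160*N + 44) * a N - 144*((N:ℝ)+1)^3 * a (N+1)‖
      ≤ |(216*(N:ℝ)^2 + 160*N + 44) * a N| + |144*((N:ℝ)+1)^3 * a (N+1)| := abs_sub _ _
    _ ≤ (216*(N:ℝ)^2 + 160*N + 44) * (((N:ℝ)+1) * (1/2)^N)
        + 144*((N:ℝ)+1)^3 * (((N:ℝ)+1+1) * (1/2)^(N+1)) := add_le_add c1 c2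
    _ = ((216*(N:ℝ)^2 + 160*N + 44) * ((N:ℝ)+1)
          + 144*((N:ℝ)+1)^3 * (((N:ℝ)+1+1) * (1/2))) * (1/2)^N := by
        rw [pow_succ (1/2:ℝ) N]; ring
    _ ≤ (288 * ((N:ℝ)+2)^4) * (1/2)^N := by
        apply mul_le_mul_of_nonneg_right _ hp.le
        nlinarith [hN, sq_nonneg ((N:ℝ))]
    _ = 288 * ((N:ℝ)+2)^4 * (1/2)^N := by ring

lemma bound_term (k : ℕ) :
    ‖(36*(k:ℝ)^3 - 108*(k:ℝ)^2 - 53*k - 9) * a k‖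
      ≤ 824 * (((k:ℕ)+2:ℕ):ℝ)^4 * (1/2)^((k:ℕ)+2) := by
  have hk : (0:ℝ) ≤ (k:ℝ) := Nat.cast_nonneg k
  have hp : (0:ℝ) < (1/2:ℝ)^k := by positivity
  have h1 := abs_a_le k
  have hc : |36*(k:ℝ)^3 - 108*(k:ℝ)^2 - 53*k - 9| ≤ 206*((k:ℝ)+1)^3 := by
    rw [abs_le]; constructor <;> nlinarith [hk, sq_nonneg ((k:ℝ))]
  calc ‖(36*(k:ℝ)^3 - 108*(k:ℝ)^2 - 53*k - 9) * a k‖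
      = |36*(k:ℝ)^3 - 108*(k:ℝ)^2 - 53*k - 9| * |a k| := abs_mul _ _
    _ ≤ 206*((k:ℝ)+1)^3 * (((k:ℝ)+1) * (1/2)^k) :=
        mul_le_mul hc h1 (abs_nonneg _) (by positivity)
    _ = (206*((k:ℝ)+1)^3 * ((k:ℝ)+1)) * (1/2)^k := by ring
    _ ≤ (206 * ((k:ℝ)+2)^4) * (1/2)^k := by
        apply mul_le_mul_of_nonneg_right _ hp.le
        nlinarith [hk, sq_nonneg ((k:ℝ))]
    _ = 824 * (((k:ℕ)+2:ℕ):ℝ)^4 * (1/2)^((k:ℕ)+2) := by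
        push_cast
        rw [pow_add]
        ring

lemma summable_main :
    Summable (fun k : ℕ => (36*(k:ℝ)^3 - 108*(k:ℝ)^2 - 53*k - 9) * a k) := by
  have h12 : ‖(1/2 : ℝ)‖ < 1 := by
    rw [Real.norm_eq_abs, abs_of_pos (by norm_num : (0:ℝ) < 1/2)]; norm_num
  have hg : Summable (fun n : ℕ => 824 * ((n:ℝ))^4 * (1/2)^n) := by
    have := summable_pow_mul_geometric_of_norm_lt_one (R := ℝ) 4 (r := 1/2) h12
    have := this.mul_left 824
    apply this.congr
    intro n; ring
  have hg2 := (summable_nat_add_iff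
    (f := fun n : ℕ => 824 * ((n:ℝ))^4 * (1/2)^n) 2).mpr hg
  exact Summable.of_norm_bounded hg2 bound_term

lemma tendsto_T :
    Filter.Tendsto (fun N : ℕ => (216*(N:ℝ)^2 + 160*N + 44) * a N - 144*((N:ℝ)+1)^3 * a (N+1))
      Filter.atTop (nhds 0) := by
  apply squeeze_zero_norm bound_T
  have h12 : |(1/2 : ℝ)| < 1 := by
    rw [abs_of_pos (by norm_num : (0:ℝ) < 1/2)]; norm_num
  have base := tendsto_pow_const_mul_const_pow_of_abs_lt_one 4 h12
  have shift := base.comp (Filter.tendsto_add_atTop_nat 2)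
  have hmul := shift.const_mul (1152 : ℝ)
  rw [mul_zero] at hmul
  have hfun : (fun N : ℕ => 288 * ((N:ℝ)+2)^4 * (1/2)^N)
      = fun N : ℕ => 1152 * (((fun n : ℕ => ((n:ℝ))^4 * (1/2)^n) ∘ (fun n => n + 2)) N) := by
    funext N
    simp only [Function.comp]
    push_cast
    rw [pow_add]
    ring
  rw [hfun]
  exact hmul

theorem telescoped_series :
    HasSum (fun k : ℕ => (36 * (k : ℝ) ^ 3 - 108 * k ^ 2 - 53 * k - 9) * a k) 0 := by
  have hsum := summable_main
  have hps : Filter.Tendsto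
      (fun N : ℕ => ∑ k ∈ Finset.range N, (36*(k:ℝ)^3 - 108*(k:ℝ)^2 - 53*k - 9) * a k)
      Filter.atTop (nhds 0) := by
    rw [Filter.tendsto_congr psum]
    exact tendsto_T
  have h0 : ∑' k : ℕ, (36*(k:ℝ)^3 - 108*(k:ℝ)^2 - 53*k - 9) * a k = 0 :=
    tendsto_nhds_unique hsum.hasSum.tendsto_sum_nat hps
  exact h0 ▸ hsum.hasSum
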